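/- arXiv:2303.15386 — 6 statements merged into one kernel-verified Lean document; each statement's English description precedes it below -/
import Mathlib

section
/- Let {δ_n} be a bounded sequence of nonnegative reals, {p_n} a sequence of nonnegative reals, p_0 ≥ 0 arbitrary, and 0 ≤ L < 1. If p_n ≤ L^n · p_0 + Σ_{k=1}^{n-1} δ_k · L^{n-k} for all n ≥ 1, then limsup_n p_n ≤ (1/(1−L)) · limsup_n δ_n. -/
/-!
The sum `∑_{k<n} δ_k L^(n-k)` is a convolution of `δ` with a geometric sequence of total mass
at most `1 / (1 - L)`. Given `c > limsup δ`, split it at an index `N` beyond which `δ_k < c`: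
the first `N` terms are damped by `L^(n-N) → 0`, the rest are at most `c / (1 - L)`.
Letting `c` decrease to `limsup δ` gives the bound.
-/

open Filter Finset Topology

section Convolution

variable {L : ℝ}

lemma sum_Ico_pow_sub_le (hL0 : 0 ≤ L) (hL1 : L < 1) (m n : ℕ) :
    ∑ k ∈ Ico m n, L ^ (n - k) ≤ 1 / (1 - L) := by
  rw [sum_Ico_reflect (L ^ ·) m n.le_succ]
  calc ∑ j ∈ Ico (n + 1 - n) (n + 1 - m), L ^ j
      ≤ L ^ (n + 1 - n) / (1 - L) := geom_sum_Ico_le_of_lt_one hL0 hL1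
    _ ≤ 1 / (1 - L) := by
      gcongr
      exact pow_le_one₀ hL0 hL1.le

lemma sum_Ico_mul_pow_sub_le (hL0 : 0 ≤ L) (hL1 : L < 1) {f : ℕ → ℝ} {c : ℝ} (hc : 0 ≤ c)
    {m : ℕ} (hf : ∀ k ≥ m, f k ≤ c) (n : ℕ) :
    ∑ k ∈ Ico m n, f k * L ^ (n - k) ≤ c / (1 - L) :=
  calc ∑ k ∈ Ico m n, f k * L ^ (n - k)
      ≤ ∑ k ∈ Ico m n, c * L ^ (n - k) :=
        sum_le_sum fun k hk => by gcongr; exact hf k (mem_Ico.1 hk).1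
    _ = c * ∑ k ∈ Ico m n, L ^ (n - k) := (mul_sum _ _ _).symm
    _ ≤ c * (1 / (1 - L)) := by gcongr; exact sum_Ico_pow_sub_le hL0 hL1 m n
    _ = c / (1 - L) := mul_one_div c _

lemma tendsto_sum_mul_pow_sub_atTop_zero (hL : |L| < 1) (f : ℕ → ℝ) (s : Finset ℕ) :
    Tendsto (fun n => ∑ k ∈ s, f k * L ^ (n - k)) atTop (𝓝 0) := by
  rw [← sum_const_zero (s := s)]
  refine tendsto_finsetSum s fun k _ => ?_
  simpa using ((tendsto_pow_atTop_nhds_zero_of_abs_lt_one hL).comp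
    (tendsto_sub_atTop_nat k)).const_mul (f k)

end Convolution

lemma limsup_le_of_eventually_le_add_of_tendsto_zero {α : Type*} {l : Filter α} [l.NeBot]
    {p a : α → ℝ} {C : ℝ} (hp : IsCoboundedUnder (· ≤ ·) l p) (ha : Tendsto a l (𝓝 0))
    (h : ∀ᶠ x in l, p x ≤ a x + C) : limsup p l ≤ C := by
  have haC : Tendsto (fun x => a x + C) l (𝓝 C) := by simpa using ha.add_const C
  calc limsup p l ≤ limsup (fun x => a x + C) l := limsup_le_limsup h hp haC.isBoundedUnder_le
    _ = C := haC.limsup_eq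

lemma limsup_le_div_of_limsup_lt {δ p : ℕ → ℝ} {L c : ℝ}
    (hδb : IsBoundedUnder (· ≤ ·) atTop δ) (hp0 : ∀ n, 0 ≤ p n) (hL0 : 0 ≤ L) (hL1 : L < 1)
    (h : ∀ n ≥ 1, p n ≤ L ^ n * p 0 + ∑ k ∈ Ico 1 n, δ k * L ^ (n - k))
    (hc : limsup δ atTop < c) (hc0 : 0 ≤ c) :
    limsup p atTop ≤ c / (1 - L) := by
  obtain ⟨N₀, hN₀⟩ := eventually_atTop.1 (eventually_lt_of_limsup_lt hc hδb)
  set N := max N₀ 1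
  have hδc : ∀ k ≥ N, δ k ≤ c := fun k hk => (hN₀ k (le_of_max_le_left hk)).le
  have hL : |L| < 1 := abs_lt.2 ⟨by linarith, hL1⟩
  have hhead : Tendsto (fun n => L ^ n * p 0 + ∑ k ∈ Ico 1 N, δ k * L ^ (n - k)) atTop (𝓝 0) := by
    simpa using ((tendsto_pow_atTop_nhds_zero_of_abs_lt_one hL).mul_const (p 0)).add
      (tendsto_sum_mul_pow_sub_atTop_zero hL δ (Ico 1 N))
  refine limsup_le_of_eventually_le_add_of_tendsto_zero
    (isCoboundedUnder_le_of_le atTop hp0) hhead (eventually_atTop.2 ⟨N, fun n hn => ?_⟩)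
  have hN1 : 1 ≤ N := le_max_right N₀ 1
  calc p n ≤ L ^ n * p 0 + ∑ k ∈ Ico 1 n, δ k * L ^ (n - k) := h n (hN1.trans hn)
    _ = L ^ n * p 0 + ∑ k ∈ Ico 1 N, δ k * L ^ (n - k) + ∑ k ∈ Ico N n, δ k * L ^ (n - k) := by
      rw [← sum_Ico_consecutive _ hN1 hn, add_assoc]
    _ ≤ L ^ n * p 0 + ∑ k ∈ Ico 1 N, δ k * L ^ (n - k) + c / (1 - L) := by
      gcongr
      exact sum_Ico_mul_pow_sub_le hL0 hL1 hc0 hδc n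

theorem stmt_0 (δ p : ℕ → ℝ) (L : ℝ)
    (hδ0 : ∀ n, 0 ≤ δ n) (hδb : ∃ M, ∀ n, δ n ≤ M)
    (hp0 : ∀ n, 0 ≤ p n)
    (hL0 : 0 ≤ L) (hL1 : L < 1)
    (h : ∀ n ≥ 1, p n ≤ L ^ n * p 0 + ∑ k ∈ Finset.Ico 1 n, δ k * L ^ (n - k)) :
    Filter.limsup p Filter.atTop ≤ (1 / (1 - L)) * Filter.limsup δ Filter.atTop := by
  have hδbdd : IsBoundedUnder (· ≤ ·) atTop δ := isBoundedUnder_of hδb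
  have hd0 : 0 ≤ limsup δ atTop := le_limsup_of_frequently_le (.of_forall hδ0) hδbdd
  have h1L : 0 < 1 - L := sub_pos.2 hL1
  refine le_of_forall_gt_imp_ge_of_dense fun b hb => ?_
  have hc : limsup δ atTop < b * (1 - L) := by rwa [one_div_mul_eq_div, div_lt_iff₀ h1L] at hb
  calc limsup p atTop ≤ b * (1 - L) / (1 - L) :=
        limsup_le_div_of_limsup_lt hδbdd hp0 hL0 hL1 h hc (hd0.trans hc.le)
    _ = b := mul_div_cancel_right₀ b h1L.ne'
end

section
/- Let D ⊆ ℝ^N, let K, Z : D → D satisfy ‖K(x) − Z(x)‖ ≤ δ₁ for all x ∈ D, and let C : D → D be a contraction with constant L_C < 1 such that ‖Z(x) − C(x)‖ ≤ δ₂ for all x ∈ D. Then for any x₀ ∈ D, limsup_n ‖K^n(x₀) − C^n(x₀)‖ ≤ (δ₁ + δ₂)/(1 − L_C). -/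
theorem stmt_3 (N : ℕ) (D : Set (EuclideanSpace ℝ (Fin N)))
    (K Z C : EuclideanSpace ℝ (Fin N) → EuclideanSpace ℝ (Fin N))
    (hK : Set.MapsTo K D D) (hZ : Set.MapsTo Z D D) (hC : Set.MapsTo C D D)
    (L_C δ₁ δ₂ : ℝ) (hL0 : 0 ≤ L_C) (hL1 : L_C < 1)
    (hcontr : ∀ x ∈ D, ∀ y ∈ D, ‖C x - C y‖ ≤ L_C * ‖x - y‖)
    (hδ₁ : ∀ x ∈ D, ‖K x - Z x‖ ≤ δ₁)
    (hδ₂ : ∀ x ∈ D, ‖Z x - C x‖ ≤ δ₂)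
    (x₀ : EuclideanSpace ℝ (Fin N)) (hx₀ : x₀ ∈ D) :
    Filter.limsup (fun n => ‖K^[n] x₀ - C^[n] x₀‖) Filter.atTop ≤ (δ₁ + δ₂) / (1 - L_C) := by
  have h1L : 0 < 1 - L_C := by linarith
  have hδ : 0 ≤ δ₁ + δ₂ := by
    have := hδ₁ x₀ hx₀
    have := hδ₂ x₀ hx₀
    have := norm_nonneg (K x₀ - Z x₀)
    have := norm_nonneg (Z x₀ - C x₀)
    linarith
  have key : ∀ n, K^[n] x₀ ∈ D ∧ C^[n] x₀ ∈ D ∧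
      ‖K^[n] x₀ - C^[n] x₀‖ ≤ (δ₁ + δ₂) / (1 - L_C) := by
    intro n
    induction n with
    | zero =>
      refine ⟨hx₀, hx₀, ?_⟩
      simp [div_nonneg hδ h1L.le]
    | succ n ih =>
      obtain ⟨hKn, hCn, hbound⟩ := ih
      refine ⟨?_, ?_, ?_⟩
      · rw [Function.iterate_succ_apply']; exact hK hKn
      · rw [Function.iterate_succ_apply']; exact hC hCn
      · rw [Function.iterate_succ_apply', Function.iterate_succ_apply']
        have t1 := hδ₁ _ hKn
        have t2 := hδ₂ _ hKn
        have t3 := hcontr _ hKn _ hCn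
        have tri : ‖K (K^[n] x₀) - C (C^[n] x₀)‖ ≤
            ‖K (K^[n] x₀) - Z (K^[n] x₀)‖ + ‖Z (K^[n] x₀) - C (K^[n] x₀)‖ +
            ‖C (K^[n] x₀) - C (C^[n] x₀)‖ := by
          have := norm_sub_le_norm_sub_add_norm_sub (K (K^[n] x₀)) (Z (K^[n] x₀)) (C (C^[n] x₀))
          have := norm_sub_le_norm_sub_add_norm_sub (Z (K^[n] x₀)) (C (K^[n] x₀)) (C (C^[n] x₀))
          linarith
        have hmul : L_C * ‖K^[n] x₀ - C^[n] x₀‖ ≤ L_C * ((δ₁ + δ₂) / (1 - L_C)) :=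
          mul_le_mul_of_nonneg_left hbound hL0
        have : ‖K (K^[n] x₀) - C (C^[n] x₀)‖ ≤ δ₁ + δ₂ + L_C * ((δ₁ + δ₂) / (1 - L_C)) := by
          linarith
        calc ‖K (K^[n] x₀) - C (C^[n] x₀)‖
            ≤ δ₁ + δ₂ + L_C * ((δ₁ + δ₂) / (1 - L_C)) := this
          _ = (δ₁ + δ₂) / (1 - L_C) := by field_simp; ring
  apply Filter.limsup_le_of_le
  · have hb : Filter.IsBoundedUnder (· ≥ ·) Filter.atTop
        (fun n => ‖K^[n] x₀ - C^[n] x₀‖) :=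
      ⟨0, Filter.eventually_map.mpr (Filter.Eventually.of_forall fun n => norm_nonneg _)⟩
    exact hb.isCobounded_le
  · exact Filter.Eventually.of_forall fun n => (key n).2.2
end

section
/- Let D ⊆ ℝ^N, let K, Z : D → D satisfy ‖K(x) − Z(x)‖ ≤ δ₁ for all x, and let C : D → D be a contraction with constant L_C < 1 satisfying ‖Z(x) − C(x)‖ ≤ δ₂ for all x. If Z^n(x₀) converges to a point x̃, then every limit point of the sequence K^n(x₀) lies in the closed ball of radius (2δ₂ + δ₁)/(1 − L_C) around x̃. -/
lemma iter_close_aux {E : Type*} [NormedAddCommGroup E] (D : Set E) (F C : E → E)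
    (hF : Set.MapsTo F D D) (hC : Set.MapsTo C D D) (L ε : ℝ)
    (hL0 : 0 ≤ L) (hL1 : L < 1)
    (hcontr : ∀ x ∈ D, ∀ y ∈ D, ‖C x - C y‖ ≤ L * ‖x - y‖)
    (hε : ∀ x ∈ D, ‖F x - C x‖ ≤ ε)
    (x₀ : E) (hx₀ : x₀ ∈ D) :
    ∀ n, ‖F^[n] x₀ - C^[n] x₀‖ ≤ ε / (1 - L) := by
  have h1L : 0 < 1 - L := by linarith
  have hε0 : 0 ≤ ε := le_trans (norm_nonneg _) (hε x₀ hx₀)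
  intro n
  induction n with
  | zero => simp; positivity
  | succ n ih =>
    have hFn : F^[n] x₀ ∈ D := hF.iterate n hx₀
    have hCn : C^[n] x₀ ∈ D := hC.iterate n hx₀
    rw [Function.iterate_succ_apply', Function.iterate_succ_apply']
    have tri : ‖F (F^[n] x₀) - C (C^[n] x₀)‖ ≤
        ‖F (F^[n] x₀) - C (F^[n] x₀)‖ + ‖C (F^[n] x₀) - C (C^[n] x₀)‖ := by
      have := norm_add_le (F (F^[n] x₀) - C (F^[n] x₀)) (C (F^[n] x₀) - C (C^[n] x₀))
      simpa using this
    have h2 : ‖C (F^[n] x₀) - C (C^[n] x₀)‖ ≤ L * (ε / (1 - L)) :=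
      le_trans (hcontr _ hFn _ hCn) (mul_le_mul_of_nonneg_left ih hL0)
    have heq : ε + L * (ε / (1 - L)) = ε / (1 - L) := by field_simp; ring
    calc ‖F (F^[n] x₀) - C (C^[n] x₀)‖ ≤ ε + L * (ε / (1 - L)) := by
          have := hε _ hFn; linarith
      _ = ε / (1 - L) := heq

theorem stmt_4 (N : ℕ) (D : Set (EuclideanSpace ℝ (Fin N))) (hD : IsComplete D)
    (K Z C : EuclideanSpace ℝ (Fin N) → EuclideanSpace ℝ (Fin N))
    (hK : Set.MapsTo K D D) (hZ : Set.MapsTo Z D D) (hC : Set.MapsTo C D D)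
    (L_C δ₁ δ₂ : ℝ) (hL0 : 0 ≤ L_C) (hL1 : L_C < 1)
    (hcontr : ∀ x ∈ D, ∀ y ∈ D, ‖C x - C y‖ ≤ L_C * ‖x - y‖)
    (hδ₁ : ∀ x ∈ D, ‖K x - Z x‖ ≤ δ₁)
    (hδ₂ : ∀ x ∈ D, ‖Z x - C x‖ ≤ δ₂)
    (x₀ : EuclideanSpace ℝ (Fin N)) (hx₀ : x₀ ∈ D)
    (xtilde : EuclideanSpace ℝ (Fin N))
    (hconv : Filter.Tendsto (fun n => Z^[n] x₀) Filter.atTop (nhds xtilde)) :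
    ∀ q : EuclideanSpace ℝ (Fin N),
      MapClusterPt q Filter.atTop (fun n => K^[n] x₀) →
      q ∈ Metric.closedBall xtilde ((2 * δ₂ + δ₁) / (1 - L_C)) := by
  intro q hq
  have h1L : 0 < 1 - L_C := by linarith
  have hKC : ∀ x ∈ D, ‖K x - C x‖ ≤ δ₁ + δ₂ := by
    intro x hx
    have := norm_add_le (K x - Z x) (Z x - C x)
    have h1 := hδ₁ x hx; have h2 := hδ₂ x hx
    simp only [sub_add_sub_cancel] at this
    linarith
  have hKbound := iter_close_aux D K C hK hC L_C (δ₁ + δ₂) hL0 hL1 hcontr hKC x₀ hx₀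
  have hZbound := iter_close_aux D Z C hZ hC L_C δ₂ hL0 hL1 hcontr hδ₂ x₀ hx₀
  have hKZ : ∀ n, ‖K^[n] x₀ - Z^[n] x₀‖ ≤ (2 * δ₂ + δ₁) / (1 - L_C) := by
    intro n
    have tri : ‖K^[n] x₀ - Z^[n] x₀‖ ≤ ‖K^[n] x₀ - C^[n] x₀‖ + ‖C^[n] x₀ - Z^[n] x₀‖ := by
      have := norm_add_le (K^[n] x₀ - C^[n] x₀) (C^[n] x₀ - Z^[n] x₀)
      simpa using this
    have h2 : ‖C^[n] x₀ - Z^[n] x₀‖ = ‖Z^[n] x₀ - C^[n] x₀‖ := norm_sub_rev _ _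
    have h3 := hKbound n; have h4 := hZbound n
    rw [h2] at tri
    have heq : (δ₁ + δ₂) / (1 - L_C) + δ₂ / (1 - L_C) = (2 * δ₂ + δ₁) / (1 - L_C) := by
      field_simp; ring
    linarith
  rw [Metric.mem_closedBall]
  have key : ∀ ε : ℝ, 0 < ε → dist q xtilde ≤ (2 * δ₂ + δ₁) / (1 - L_C) + ε := by
    intro ε hε
    have hev : ∀ᶠ n in Filter.atTop, dist (Z^[n] x₀) xtilde < ε / 2 :=
      (Metric.tendsto_nhds.mp hconv) (ε / 2) (by linarith)
    have hfr : ∃ᶠ n in Filter.atTop, dist (K^[n] x₀) q < ε / 2 := by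
      have := mapClusterPt_iff_frequently.mp hq (Metric.ball q (ε / 2))
        (Metric.ball_mem_nhds q (by linarith))
      simpa [Metric.mem_ball] using this
    obtain ⟨n, hn1, hn2⟩ := (hfr.and_eventually hev).exists
    have tri : dist q xtilde ≤ dist q (K^[n] x₀) + dist (K^[n] x₀) (Z^[n] x₀)
        + dist (Z^[n] x₀) xtilde := dist_triangle4 _ _ _ _
    have h1 : dist q (K^[n] x₀) < ε / 2 := by rwa [dist_comm]
    have h2 : dist (K^[n] x₀) (Z^[n] x₀) ≤ (2 * δ₂ + δ₁) / (1 - L_C) := by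
      rw [dist_eq_norm]; exact hKZ n
    linarith
  exact le_of_forall_pos_le_add key
end

section
/- Consider a finite game Γ^M on a finite joint action set A with players M and utilities u_i^M, and suppose there is an exact potential game Γ with potential φ on A such that the maximum pairwise difference d(Γ, Γ^M) ≤ δ. Suppose a better-response path of play in Γ^M enters a cycle (a₁, …, a_π) of length π, where at each step r the updating player n_r strictly improves: u_{n_r}^M(a^r) − u_{n_r}^M(a^{r−1}) = α_r > 0 and a^π = a^0. Then for every r, α_r < π·δ. In particular every action profile on the cycle is a (π·δ)-approximate Nash equilibrium of Γ^M whenever α_r attains the maximal unilateral improvement, and since π ≤ |A|, the cycle lies inside the (|A|·δ)-Nash-equilibrium set. -/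
theorem stmt_7 (I : Type*) [Fintype I] [DecidableEq I]
    (A : I → Type*) [∀ i, Fintype (A i)]
    (u uM : I → (∀ i, A i) → ℝ) (φ : (∀ i, A i) → ℝ)
    (hpot : ∀ (i : I) (a : ∀ j, A j) (q : A i),
      u i (Function.update a i q) - u i a = φ (Function.update a i q) - φ a)
    (δ : ℝ) (hδ : 0 ≤ δ)
    (hmpd : ∀ (i : I) (a : ∀ j, A j) (q : A i),
      |(uM i (Function.update a i q) - uM i a) -
        (u i (Function.update a i q) - u i a)| ≤ δ)
    (π : ℕ) (hπ : 1 ≤ π)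
    (a : ℕ → ∀ i, A i) (n : ℕ → I)
    (hper : ∀ r, a (r + π) = a r)
    (hstep : ∀ r, a (r + 1) = Function.update (a r) (n (r + 1)) (a (r + 1) (n (r + 1))))
    (himp : ∀ r, 0 < uM (n (r + 1)) (a (r + 1)) - uM (n (r + 1)) (a r))
    (hinj : Set.InjOn a (Set.Iio π)) :
    (∀ r, uM (n (r + 1)) (a (r + 1)) - uM (n (r + 1)) (a r) < π * δ) ∧
    (∀ r, (∀ (i : I) (q : A i), uM i (Function.update (a r) i q) - uM i (a r) ≤
        uM (n (r + 1)) (a (r + 1)) - uM (n (r + 1)) (a r)) →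
      ∀ (i : I) (q : A i), uM i (Function.update (a r) i q) - uM i (a r) ≤ π * δ) ∧
    (∀ r, (∀ (i : I) (q : A i), uM i (Function.update (a r) i q) - uM i (a r) ≤
        uM (n (r + 1)) (a (r + 1)) - uM (n (r + 1)) (a r)) →
      ∀ (i : I) (q : A i), uM i (Function.update (a r) i q) - uM i (a r) ≤
        (Fintype.card (∀ i, A i)) * δ) := by
  -- per-step bound: φ increases by at least α_k - δ
  have step : ∀ k : ℕ,
      (uM (n (k+1)) (a (k+1)) - uM (n (k+1)) (a k)) - δ ≤ φ (a (k+1)) - φ (a k) := by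
    intro k
    have h := hstep k
    have h1 := hpot (n (k+1)) (a k) (a (k+1) (n (k+1)))
    have h2 := hmpd (n (k+1)) (a k) (a (k+1) (n (k+1)))
    rw [← h] at h1 h2
    have := (abs_le.mp h2).2
    linarith
  have key : ∀ r, uM (n (r + 1)) (a (r + 1)) - uM (n (r + 1)) (a r) < π * δ := by
    intro r
    rcases eq_or_lt_of_le hπ with h1 | h2
    · -- π = 1 : then a (r+1) = a r, contradicting strict improvement
      exfalso
      have hp := hper r
      rw [← h1] at hp
      have := himp r
      rw [hp] at this
      linarith
    · -- π ≥ 2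
      have htel : ∑ k ∈ Finset.range π, (φ (a (r + k + 1)) - φ (a (r + k))) = 0 := by
        have := Finset.sum_range_sub (f := fun k => φ (a (r + k))) π
        simp only [Nat.add_zero] at this
        simp only [← Nat.add_assoc] at this
        rw [this, hper r, sub_self]
      have hlb : ∀ k ∈ Finset.range π,
          (uM (n (r + k + 1)) (a (r + k + 1)) - uM (n (r + k + 1)) (a (r + k))) - δ ≤
            φ (a (r + k + 1)) - φ (a (r + k)) := fun k _ => step (r + k)
      have hsum := Finset.sum_le_sum hlb
      rw [htel] at hsum
      -- split off the alpha sum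
      have hαsum : uM (n (r + 1)) (a (r + 1)) - uM (n (r + 1)) (a r) <
          ∑ k ∈ Finset.range π, (uM (n (r + k + 1)) (a (r + k + 1)) - uM (n (r + k + 1)) (a (r + k))) := by
        have h0 : (0 : ℕ) ∈ Finset.range π := Finset.mem_range.mpr (by omega)
        have h1 : (1 : ℕ) ∈ Finset.range π := Finset.mem_range.mpr (by omega)
        have := Finset.single_lt_sum (f := fun k =>
          uM (n (r + k + 1)) (a (r + k + 1)) - uM (n (r + k + 1)) (a (r + k)))
          (by norm_num : (1:ℕ) ≠ 0) h0 h1 (himp (r + 1))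
          (fun k _ _ => (himp (r + k)).le)
        simpa using this
      have hsplit : ∑ k ∈ Finset.range π,
          ((uM (n (r + k + 1)) (a (r + k + 1)) - uM (n (r + k + 1)) (a (r + k))) - δ)
          = (∑ k ∈ Finset.range π, (uM (n (r + k + 1)) (a (r + k + 1)) - uM (n (r + k + 1)) (a (r + k)))) - π * δ := by
        rw [Finset.sum_sub_distrib]
        simp [mul_comm]
      rw [hsplit] at hsum
      linarith
  refine ⟨key, ?_, ?_⟩
  · intro r hmax i q
    exact le_of_lt ((hmax i q).trans_lt (key r))
  · intro r hmax i q
    have hcard : (π : ℝ) ≤ Fintype.card (∀ i, A i) := by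
      have : (Finset.range π).card ≤ (Finset.univ : Finset (∀ i, A i)).card := by
        apply Finset.card_le_card_of_injOn a (fun x _ => Finset.mem_univ _)
        intro x hx y hy
        exact hinj (by simpa using hx) (by simpa using hy)
      simp only [Finset.card_range, Finset.card_univ] at this
      exact_mod_cast this
    have := (hmax i q).trans_lt (key r)
    have : (π : ℝ) * δ ≤ (Fintype.card (∀ i, A i)) * δ := by
      exact mul_le_mul_of_nonneg_right hcard hδ
    linarith [(hmax i q).trans_lt (key r)]
end

section
/- Consider a simultaneous best-response dynamic {x^t} in a game Γ^M whose maximum pairwise difference to a potential game with potential φ is at most δ, with N players. Suppose at step t the profile x^t is not an ε-equilibrium, and the second-order Taylor remainder term is bounded: φ(x^{t+1}) = φ(x^t) + Σ_{m=1}^N [φ(x_m^{t+1}, x_{−m}^t) − φ(x_m^t, x_{−m}^t)] + R_t with |R_t| ≤ k^t. Then φ(x^{t+1}) − φ(x^t) ≥ ε − Nδ − k^t. -/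
theorem stmt_11 (N : ℕ) (A : Fin N → Type*)
    (uM : Fin N → (∀ i, A i) → ℝ) (φ : (∀ i, A i) → ℝ)
    (δ ε k R : ℝ) (x xnext : ∀ i, A i)
    (hmpd : ∀ (m : Fin N) (q : A m),
      (uM m (Function.update x m q) - uM m x) -
        (φ (Function.update x m q) - φ x) ≤ δ)
    (hbr : ∀ (m : Fin N) (q : A m),
      uM m (Function.update x m q) ≤ uM m (Function.update x m (xnext m)))
    (hne : ∃ (m₀ : Fin N) (q : A m₀), ε < uM m₀ (Function.update x m₀ q) - uM m₀ x)
    (htaylor : φ xnext =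
      φ x + ∑ m : Fin N, (φ (Function.update x m (xnext m)) - φ x) + R)
    (hR : |R| ≤ k) :
    ε - N * δ - k ≤ φ xnext - φ x := by
  have hpos : ∀ m : Fin N, 0 ≤ uM m (Function.update x m (xnext m)) - uM m x := by
    intro m
    have h := hbr m (x m)
    rw [Function.update_eq_self] at h
    linarith
  obtain ⟨m₀, q, hq⟩ := hne
  have h1 : ε ≤ uM m₀ (Function.update x m₀ (xnext m₀)) - uM m₀ x := by
    have := hbr m₀ q; linarith
  have hsumu : ε ≤ ∑ m : Fin N, (uM m (Function.update x m (xnext m)) - uM m x) := by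
    have := Finset.single_le_sum
      (f := fun m : Fin N => uM m (Function.update x m (xnext m)) - uM m x)
      (fun i _ => hpos i) (Finset.mem_univ m₀)
    linarith
  have hsumφ : ∑ m : Fin N, (uM m (Function.update x m (xnext m)) - uM m x - δ) ≤
      ∑ m : Fin N, (φ (Function.update x m (xnext m)) - φ x) := by
    apply Finset.sum_le_sum
    intro m _
    have := hmpd m (xnext m)
    linarith
  have hsplit : ∑ m : Fin N, (uM m (Function.update x m (xnext m)) - uM m x - δ)
      = (∑ m : Fin N, (uM m (Function.update x m (xnext m)) - uM m x)) - N * δ := by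
    rw [Finset.sum_sub_distrib]
    simp [mul_comm]
  have hRk : -k ≤ R := (abs_le.mp hR).1
  rw [hsplit] at hsumφ
  linarith
end

section
/- Let D ⊆ ℝ^N be complete, C : D → D a contraction with constant L_C < 1 and fixed point x*, and K : D → D with ‖K^{n+1}(x₀) − C^{n+1}(x₀)‖ ≤ ρ := (δ₁+δ₂)/(1−L_C) eventually. Let {x̂_n} be estimates with ‖x̂_n − K^n(x₀)‖ → 0, and suppose ‖K(x) − K(y)‖ ≤ 2(δ₁+δ₂) + L_C‖x − y‖ for all x, y in the relevant domain. Then limsup_n ‖K(x̂_n) − C^{n+1}(x₀)‖ ≤ (δ₁+δ₂)(3 − 2L_C)/(1 − L_C); hence K(x̂_n) eventually lies in any ball of radius strictly greater than (δ₁+δ₂)(3−2L_C)/(1−L_C) around x*. -/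
theorem stmt_18 (N : ℕ)
    (K C : EuclideanSpace ℝ (Fin N) → EuclideanSpace ℝ (Fin N))
    (L_C δ₁ δ₂ : ℝ) (hL0 : 0 ≤ L_C) (hL1 : L_C < 1)
    (hδ₁ : 0 ≤ δ₁) (hδ₂ : 0 ≤ δ₂)
    (hcontr : ∀ x y, ‖C x - C y‖ ≤ L_C * ‖x - y‖)
    (xstar : EuclideanSpace ℝ (Fin N)) (hfix : C xstar = xstar)
    (x₀ : EuclideanSpace ℝ (Fin N))
    (hKC : ∀ᶠ n in Filter.atTop,
      ‖K^[n + 1] x₀ - C^[n + 1] x₀‖ ≤ (δ₁ + δ₂) / (1 - L_C))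
    (xhat : ℕ → EuclideanSpace ℝ (Fin N))
    (hest : Filter.Tendsto (fun n => ‖xhat n - K^[n] x₀‖) Filter.atTop (nhds 0))
    (hKlip : ∀ x y, ‖K x - K y‖ ≤ 2 * (δ₁ + δ₂) + L_C * ‖x - y‖) :
    Filter.limsup (fun n => ‖K (xhat n) - C^[n + 1] x₀‖) Filter.atTop ≤
      (δ₁ + δ₂) * (3 - 2 * L_C) / (1 - L_C) ∧
    ∀ r > (δ₁ + δ₂) * (3 - 2 * L_C) / (1 - L_C),
      ∀ᶠ n in Filter.atTop, K (xhat n) ∈ Metric.ball xstar r := by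
  have h1L : (0:ℝ) < 1 - L_C := by linarith
  set B : ℝ := (δ₁ + δ₂) * (3 - 2 * L_C) / (1 - L_C) with hB
  set f : ℕ → ℝ := fun n => ‖K (xhat n) - C^[n + 1] x₀‖ with hf
  set g : ℕ → ℝ := fun n =>
    2 * (δ₁ + δ₂) + L_C * ‖xhat n - K^[n] x₀‖ + (δ₁ + δ₂) / (1 - L_C) with hg
  -- f ≤ g eventually
  have hfg : ∀ᶠ n in Filter.atTop, f n ≤ g n := by
    filter_upwards [hKC] with n hn
    have h1 : ‖K (xhat n) - C^[n + 1] x₀‖ ≤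
        ‖K (xhat n) - K (K^[n] x₀)‖ + ‖K (K^[n] x₀) - C^[n + 1] x₀‖ :=
      norm_sub_le_norm_sub_add_norm_sub _ _ _
    have h2 : K (K^[n] x₀) = K^[n + 1] x₀ := (Function.iterate_succ_apply' K n x₀).symm
    have h3 := hKlip (xhat n) (K^[n] x₀)
    rw [h2] at h1 h3
    simp only [hf, hg]
    linarith
  -- g tends to B
  have hgB : Filter.Tendsto g Filter.atTop (nhds B) := by
    have : Filter.Tendsto g Filter.atTop
        (nhds (2 * (δ₁ + δ₂) + L_C * 0 + (δ₁ + δ₂) / (1 - L_C))) := by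
      exact (((tendsto_const_nhds.add ((tendsto_const_nhds.mul hest)))).add
        tendsto_const_nhds)
    have hBeq : 2 * (δ₁ + δ₂) + L_C * 0 + (δ₁ + δ₂) / (1 - L_C) = B := by
      rw [hB]; field_simp; ring
    rwa [hBeq] at this
  clear_value B f g
  constructor
  · have h0 : ∀ᶠ n in Filter.atTop, (0:ℝ) ≤ f n :=
      Filter.Eventually.of_forall fun n => by rw [hf]; exact norm_nonneg _
    calc Filter.limsup f Filter.atTop
        ≤ Filter.limsup g Filter.atTop := by
          exact Filter.limsup_le_limsup hfg
            (Filter.isCoboundedUnder_le_of_eventually_le Filter.atTop h0)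
            hgB.isBoundedUnder_le
      _ = B := hgB.limsup_eq
  · intro r hr
    have hε : (0:ℝ) < (r - B) / 2 := by linarith
    -- C iterates converge to xstar
    have hCn : ∀ n, ‖C^[n] x₀ - xstar‖ ≤ L_C ^ n * ‖x₀ - xstar‖ := by
      intro n
      induction n with
      | zero => simp
      | succ n ih =>
        rw [Function.iterate_succ_apply']
        calc ‖C (C^[n] x₀) - xstar‖ = ‖C (C^[n] x₀) - C xstar‖ := by rw [hfix]
          _ ≤ L_C * ‖C^[n] x₀ - xstar‖ := hcontr _ _
          _ ≤ L_C * (L_C ^ n * ‖x₀ - xstar‖) := by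
              exact mul_le_mul_of_nonneg_left ih hL0
          _ = L_C ^ (n + 1) * ‖x₀ - xstar‖ := by ring
    have hCt : Filter.Tendsto (fun n => ‖C^[n + 1] x₀ - xstar‖) Filter.atTop (nhds 0) := by
      apply squeeze_zero (fun n => norm_nonneg _) (fun n => hCn (n + 1))
      have hpow : Filter.Tendsto (fun n : ℕ => L_C ^ (n + 1) * ‖x₀ - xstar‖)
          Filter.atTop (nhds (0 * ‖x₀ - xstar‖)) := by
        exact ((tendsto_pow_atTop_nhds_zero_of_lt_one hL0 hL1).comp
          (Filter.tendsto_add_atTop_nat 1)).mul tendsto_const_nhds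
      simpa using hpow
    have hg' : ∀ᶠ n in Filter.atTop, g n < B + (r - B) / 2 :=
      hgB.eventually (Filter.Tendsto.eventually_lt_const (by linarith) Filter.tendsto_id)
        |>.mono fun n hn => hn
    have hC' : ∀ᶠ n in Filter.atTop, ‖C^[n + 1] x₀ - xstar‖ < (r - B) / 2 :=
      hCt.eventually (Filter.Tendsto.eventually_lt_const hε Filter.tendsto_id)
        |>.mono fun n hn => hn
    filter_upwards [hfg, hg', hC'] with n h1 h2 h3
    rw [Metric.mem_ball, dist_eq_norm]
    have htri : ‖K (xhat n) - xstar‖ ≤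
        ‖K (xhat n) - C^[n + 1] x₀‖ + ‖C^[n + 1] x₀ - xstar‖ :=
      norm_sub_le_norm_sub_add_norm_sub _ _ _
    simp only [hf] at h1
    linarith
end
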